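/- Let μ₁, μ₂, σ₁, σ₂ ∈ ℝ^d with σ₁ and σ₂ componentwise nonnegative, and let f : ℝ^d → ℝ be K-Lipschitz for some K ≥ 0 and integrable against both N(μ₁, diag σ₁²) and N(μ₂, diag σ₂²). Then | ∫ f dN(μ₁, diag σ₁²) − ∫ f dN(μ₂, diag σ₂²) | ≤ K · √( ‖μ₁ − μ₂‖² + ‖σ₁ − σ₂‖² ). -/

import Mathlib

open MeasureTheory ProbabilityTheory

/-- The diagonal Gaussian measure `N(μ, diag σ²)` on `ℝ^d`: the product of the
one-dimensional Gaussians with mean `μ i` and variance `(σ i)²` (a Dirac mass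
whenever `σ i = 0`). -/
noncomputable def gaussianPi {d : ℕ} (μ σ : EuclideanSpace ℝ (Fin d)) :
    Measure (EuclideanSpace ℝ (Fin d)) :=
  (Measure.pi fun i => gaussianReal (μ i) ⟨(σ i) ^ 2, sq_nonneg _⟩).map (WithLp.toLp 2)

/-! Couple the two Gaussians synchronously: if `Z` is a standard Gaussian vector, then
`Xₖ = μₖ + σₖ ⊙ Z` has law `N(μₖ, diag σₖ²)`. A `K`-Lipschitz `f` then gives
`|E f(X₁) - E f(X₂)| ≤ K E‖X₁ - X₂‖ ≤ K (E‖X₁ - X₂‖²)^(1/2)`, and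
`X₁ - X₂ = (μ₁ - μ₂) + (σ₁ - σ₂) ⊙ Z` has second moment `‖μ₁ - μ₂‖² + ‖σ₁ - σ₂‖²`. -/

open Real
open scoped NNReal

theorem abs_integral_sub_le_mul_integral_norm_sub {Ω E : Type*} [MeasurableSpace Ω]
    [NormedAddCommGroup E] {P : Measure Ω} {X Y : Ω → E} {f : E → ℝ} {K : ℝ}
    (hf : ∀ z z', |f z - f z'| ≤ K * ‖z - z'‖)
    (hX : Integrable (fun ω => f (X ω)) P) (hY : Integrable (fun ω => f (Y ω)) P)
    (hXY : Integrable (fun ω => ‖X ω - Y ω‖) P) :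
    |∫ ω, f (X ω) ∂P - ∫ ω, f (Y ω) ∂P| ≤ K * ∫ ω, ‖X ω - Y ω‖ ∂P := by
  rw [← integral_sub hX hY, ← integral_const_mul]
  calc |∫ ω, f (X ω) - f (Y ω) ∂P| ≤ ∫ ω, |f (X ω) - f (Y ω)| ∂P :=
        abs_integral_le_integral_abs
    _ ≤ ∫ ω, K * ‖X ω - Y ω‖ ∂P :=
        integral_mono (hX.sub hY).abs (hXY.const_mul K) fun ω => hf _ _

theorem integral_le_sqrt_integral_sq {Ω : Type*} [MeasurableSpace Ω] {P : Measure Ω}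
    [IsProbabilityMeasure P] {g : Ω → ℝ} (hg : MemLp g 2 P) :
    ∫ ω, g ω ∂P ≤ √(∫ ω, g ω ^ 2 ∂P) := by
  have hvar := variance_nonneg g P
  rw [variance_eq_sub hg] at hvar
  calc ∫ ω, g ω ∂P ≤ √((∫ ω, g ω ∂P) ^ 2) := (le_abs_self _).trans_eq (sqrt_sq_eq_abs _).symm
    _ ≤ √(∫ ω, g ω ^ 2 ∂P) := Real.sqrt_le_sqrt (by simpa [Pi.pow_apply] using hvar)

theorem MeasureTheory.MeasurePreserving.integral_comp_of_aestronglyMeasurable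
    {α β G : Type*} [MeasurableSpace α] [MeasurableSpace β] [NormedAddCommGroup G]
    [NormedSpace ℝ G] {μ : Measure α} {ν : Measure β} {f : α → β} {g : β → G}
    (hf : MeasurePreserving f μ ν) (hg : AEStronglyMeasurable g ν) :
    ∫ x, g (f x) ∂μ = ∫ y, g y ∂ν := by
  rw [← hf.map_eq, integral_map hf.measurable.aemeasurable (hf.map_eq ▸ hg)]

theorem integral_sq_gaussianReal (m : ℝ) (v : ℝ≥0) :
    ∫ x, x ^ 2 ∂gaussianReal m v = m ^ 2 + v := by
  have h := variance_eq_sub (memLp_id_gaussianReal (μ := m) (v := v) 2)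
  simp only [variance_id_gaussianReal, Pi.pow_apply, id, integral_id_gaussianReal] at h
  linarith

theorem measurePreserving_const_add_mul_gaussianReal (m s : ℝ) :
    MeasurePreserving (fun x => m + s * x) (gaussianReal 0 1)
      (gaussianReal m ⟨s ^ 2, sq_nonneg _⟩) := by
  refine ⟨by fun_prop, ?_⟩
  rw [show (fun x => m + s * x) = (m + ·) ∘ (s * ·) from rfl,
    ← Measure.map_map (by fun_prop) (by fun_prop), gaussianReal_map_const_mul,
    gaussianReal_map_const_add]
  congr 1
  · simp
  · ext; simp; rfl

-- `gaussianPi` writes the variance as an anonymous constructor of `{r // 0 ≤ r}`, which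
-- instance search does not match against `ℝ≥0`.
instance isProbabilityMeasure_gaussianReal_sq (m s : ℝ) :
    IsProbabilityMeasure (gaussianReal m ⟨s ^ 2, sq_nonneg s⟩) :=
  instIsProbabilityMeasureGaussianReal _ _

section DiagonalGaussian

variable {d : ℕ}

instance isProbabilityMeasure_gaussianPi (μ σ : EuclideanSpace ℝ (Fin d)) :
    IsProbabilityMeasure (gaussianPi μ σ) :=
  Measure.isProbabilityMeasure_map (WithLp.measurable_toLp 2 _).aemeasurable

def diagAffine (μ σ : EuclideanSpace ℝ (Fin d)) (z : Fin d → ℝ) : EuclideanSpace ℝ (Fin d) :=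
  WithLp.toLp 2 fun i => μ i + σ i * z i

theorem diagAffine_sub_diagAffine (μ₁ μ₂ σ₁ σ₂ : EuclideanSpace ℝ (Fin d)) (z : Fin d → ℝ) :
    diagAffine μ₁ σ₁ z - diagAffine μ₂ σ₂ z = diagAffine (μ₁ - μ₂) (σ₁ - σ₂) z := by
  ext i
  simp only [diagAffine, PiLp.sub_apply]
  ring

theorem measurePreserving_diagAffine (μ σ : EuclideanSpace ℝ (Fin d)) :
    MeasurePreserving (diagAffine μ σ) (Measure.pi fun _ => gaussianReal 0 1) (gaussianPi μ σ) :=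
  (MeasurePreserving.mk (WithLp.measurable_toLp 2 _) rfl).comp
    (measurePreserving_pi _ _ fun i => measurePreserving_const_add_mul_gaussianReal (μ i) (σ i))

theorem measurePreserving_eval_gaussianPi (μ σ : EuclideanSpace ℝ (Fin d)) (i : Fin d) :
    MeasurePreserving (fun x : EuclideanSpace ℝ (Fin d) => x i) (gaussianPi μ σ)
      (gaussianReal (μ i) ⟨σ i ^ 2, sq_nonneg _⟩) :=
  ⟨by fun_prop, by
    rw [gaussianPi, Measure.map_map (by fun_prop) (WithLp.measurable_toLp 2 _)]
    exact (measurePreserving_eval _ i).map_eq⟩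

theorem integrable_apply_sq_gaussianPi (μ σ : EuclideanSpace ℝ (Fin d)) (i : Fin d) :
    Integrable (fun x : EuclideanSpace ℝ (Fin d) => x i ^ 2) (gaussianPi μ σ) :=
  (measurePreserving_eval_gaussianPi μ σ i).integrable_comp_of_integrable (g := fun x => x ^ 2)
    (memLp_id_gaussianReal 2).integrable_sq

theorem integrable_norm_sq_gaussianPi (μ σ : EuclideanSpace ℝ (Fin d)) :
    Integrable (fun x => ‖x‖ ^ 2) (gaussianPi μ σ) := by
  simp_rw [EuclideanSpace.real_norm_sq_eq]
  exact integrable_finsetSum _ fun i _ => integrable_apply_sq_gaussianPi μ σ i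

theorem integral_norm_sq_gaussianPi (μ σ : EuclideanSpace ℝ (Fin d)) :
    ∫ x, ‖x‖ ^ 2 ∂gaussianPi μ σ = ‖μ‖ ^ 2 + ‖σ‖ ^ 2 := by
  simp_rw [EuclideanSpace.real_norm_sq_eq, ← Finset.sum_add_distrib]
  rw [integral_finsetSum _ fun i _ => integrable_apply_sq_gaussianPi μ σ i]
  refine Finset.sum_congr rfl fun i _ => ?_
  rw [(measurePreserving_eval_gaussianPi μ σ i).integral_comp_of_aestronglyMeasurable
    (g := fun x => x ^ 2) (by fun_prop)]
  exact integral_sq_gaussianReal _ _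

theorem memLp_norm_gaussianPi (μ σ : EuclideanSpace ℝ (Fin d)) :
    MemLp (fun x => ‖x‖) 2 (gaussianPi μ σ) :=
  (memLp_two_iff_integrable_sq (by fun_prop)).2 (integrable_norm_sq_gaussianPi μ σ)

theorem integral_norm_gaussianPi_le (μ σ : EuclideanSpace ℝ (Fin d)) :
    ∫ x, ‖x‖ ∂gaussianPi μ σ ≤ √(‖μ‖ ^ 2 + ‖σ‖ ^ 2) :=
  (integral_le_sqrt_integral_sq (memLp_norm_gaussianPi μ σ)).trans_eq
    (by rw [integral_norm_sq_gaussianPi])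

end DiagonalGaussian

theorem gaussian_lipschitz_ipm_bound_general {d : ℕ}
    (μ₁ μ₂ σ₁ σ₂ : EuclideanSpace ℝ (Fin d))
    (K : ℝ) (hK : 0 ≤ K) (f : EuclideanSpace ℝ (Fin d) → ℝ)
    (hf : ∀ z z', |f z - f z'| ≤ K * ‖z - z'‖)
    (hf₁ : Integrable f (gaussianPi μ₁ σ₁)) (hf₂ : Integrable f (gaussianPi μ₂ σ₂)) :
    |(∫ z, f z ∂gaussianPi μ₁ σ₁) - ∫ z, f z ∂gaussianPi μ₂ σ₂| ≤
      K * Real.sqrt (‖μ₁ - μ₂‖ ^ 2 + ‖σ₁ - σ₂‖ ^ 2) := by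
  set γ := Measure.pi fun _ : Fin d => gaussianReal 0 1
  have h₁ : MeasurePreserving (diagAffine μ₁ σ₁) γ _ := measurePreserving_diagAffine μ₁ σ₁
  have h₂ : MeasurePreserving (diagAffine μ₂ σ₂) γ _ := measurePreserving_diagAffine μ₂ σ₂
  have hδ := measurePreserving_diagAffine (μ₁ - μ₂) (σ₁ - σ₂)
  have hnorm : AEStronglyMeasurable (fun x => ‖x‖) (gaussianPi (μ₁ - μ₂) (σ₁ - σ₂)) := by
    fun_prop
  have hδ_norm : ∫ z, ‖diagAffine μ₁ σ₁ z - diagAffine μ₂ σ₂ z‖ ∂γ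
      = ∫ x, ‖x‖ ∂gaussianPi (μ₁ - μ₂) (σ₁ - σ₂) := by
    simp_rw [diagAffine_sub_diagAffine]
    exact hδ.integral_comp_of_aestronglyMeasurable hnorm
  have hδ_integrable : Integrable (fun z => ‖diagAffine μ₁ σ₁ z - diagAffine μ₂ σ₂ z‖) γ := by
    simp_rw [diagAffine_sub_diagAffine]
    exact (hδ.integrable_comp hnorm).2 ((memLp_norm_gaussianPi _ _).integrable one_le_two)
  rw [← h₁.integral_comp_of_aestronglyMeasurable hf₁.aestronglyMeasurable,
    ← h₂.integral_comp_of_aestronglyMeasurable hf₂.aestronglyMeasurable]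
  calc _ ≤ K * ∫ z, ‖diagAffine μ₁ σ₁ z - diagAffine μ₂ σ₂ z‖ ∂γ :=
        abs_integral_sub_le_mul_integral_norm_sub hf
          ((h₁.integrable_comp hf₁.aestronglyMeasurable).2 hf₁)
          ((h₂.integrable_comp hf₂.aestronglyMeasurable).2 hf₂) hδ_integrable
    _ ≤ _ := by
        rw [hδ_norm]
        exact mul_le_mul_of_nonneg_left (integral_norm_gaussianPi_le _ _) hK

/-- **Lipschitz integral probability metric bound between diagonal Gaussians** (combining
the coupling bound, `W₁ ≤ W₂`, and the closed-form Gaussian `W₂` distance, as used in the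
proof of Lemma 2). For a `K`-Lipschitz `f : ℝ^d → ℝ` integrable against both Gaussians,
`|∫ f dN(μ₁, diag σ₁²) − ∫ f dN(μ₂, diag σ₂²)| ≤ K √(‖μ₁−μ₂‖² + ‖σ₁−σ₂‖²)`. -/
theorem gaussian_lipschitz_ipm_bound {d : ℕ}
    (μ₁ μ₂ σ₁ σ₂ : EuclideanSpace ℝ (Fin d))
    (hσ₁ : ∀ i, 0 ≤ σ₁ i) (hσ₂ : ∀ i, 0 ≤ σ₂ i)
    (K : ℝ) (hK : 0 ≤ K) (f : EuclideanSpace ℝ (Fin d) → ℝ)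
    (hf : ∀ z z', |f z - f z'| ≤ K * ‖z - z'‖)
    (hf₁ : Integrable f (gaussianPi μ₁ σ₁)) (hf₂ : Integrable f (gaussianPi μ₂ σ₂)) :
    |(∫ z, f z ∂gaussianPi μ₁ σ₁) - ∫ z, f z ∂gaussianPi μ₂ σ₂| ≤
      K * Real.sqrt (‖μ₁ - μ₂‖ ^ 2 + ‖σ₁ - σ₂‖ ^ 2) :=
  gaussian_lipschitz_ipm_bound_general μ₁ μ₂ σ₁ σ₂ K hK f hf hf₁ hf₂
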